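/- arXiv:1809.09355 — 6 statements merged into one kernel-verified Lean document; each statement's English description precedes it below -/
import Mathlib

section
/- Let q : ℝ × ℝ → ℝ be a polynomial of total degree at most 5. Then the average of q over the rectangle [x₀ - Δx/2, x₀ + Δx/2] × [y₀ - Δy/2, y₀ + Δy/2] equals q(x₀,y₀) + (Δx²/24)·q_xx(x₀,y₀) + (Δy²/24)·q_yy(x₀,y₀) + (Δx⁴/1920)·q_xxxx(x₀,y₀) + (Δx²Δy²/576)·q_xxyy(x₀,y₀) + (Δy⁴/1920)·q_yyyy(x₀,y₀). -/
/-!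
Both sides are linear in `f`, so it suffices to treat the monomials `c x^a y^b` with
`a + b ≤ 5`. For those the cell average is the product of two one-dimensional averages, and
the average of `x^a` over `[x₀ - h/2, x₀ + h/2]` is `∑ₖ h^(2k) / (4^k (2k+1)!) · (x^a)⁽²ᵏ⁾(x₀)`,
a sum that stops at `k = 2` when `a ≤ 5`. In the product of the two expansions every term pairing
a fourth derivative with a second or fourth one requires `a + b ≥ 6`, so it vanishes.
-/

open MeasureTheory

/-- Partial derivative in the first variable. -/
noncomputable def pdx (f : ℝ → ℝ → ℝ) : ℝ → ℝ → ℝ := fun x y => deriv (fun x' => f x' y) x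

/-- Partial derivative in the second variable. -/
noncomputable def pdy (f : ℝ → ℝ → ℝ) : ℝ → ℝ → ℝ := fun x y => deriv (fun y' => f x y') y

open intervalIntegral

noncomputable def cellAverage (f : ℝ → ℝ → ℝ) (x₀ y₀ Δx Δy : ℝ) : ℝ :=
  (1 / (Δx * Δy)) *
    ∫ x in (x₀ - Δx / 2)..(x₀ + Δx / 2), ∫ y in (y₀ - Δy / 2)..(y₀ + Δy / 2), f x y

noncomputable def conversionFormula (f : ℝ → ℝ → ℝ) (x₀ y₀ Δx Δy : ℝ) : ℝ :=
  f x₀ y₀ + (Δx ^ 2 / 24) * pdx^[2] f x₀ y₀ + (Δy ^ 2 / 24) * pdy^[2] f x₀ y₀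
    + (Δx ^ 4 / 1920) * pdx^[4] f x₀ y₀
    + (Δx ^ 2 * Δy ^ 2 / 576) * pdx^[2] (pdy^[2] f) x₀ y₀
    + (Δy ^ 4 / 1920) * pdy^[4] f x₀ y₀

noncomputable def monomialFn (c : ℝ) (a b : ℕ) : ℝ → ℝ → ℝ := fun x y => c * x ^ a * y ^ b

section Derivatives

variable {ι : Type*} (s : Finset ι)

lemma pdx_finset_sum (g : ι → ℝ → ℝ → ℝ) (hg : ∀ i ∈ s, ∀ y, Differentiable ℝ (g i · y)) :
    pdx (fun x y => ∑ i ∈ s, g i x y) = fun x y => ∑ i ∈ s, pdx (g i) x y := by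
  funext x y
  exact deriv_fun_sum fun i hi => (hg i hi y).differentiableAt

lemma pdy_finset_sum (g : ι → ℝ → ℝ → ℝ) (hg : ∀ i ∈ s, ∀ x, Differentiable ℝ (g i x ·)) :
    pdy (fun x y => ∑ i ∈ s, g i x y) = fun x y => ∑ i ∈ s, pdy (g i) x y := by
  funext x y
  exact deriv_fun_sum fun i hi => (hg i hi x).differentiableAt

variable (c : ℝ) (a b : ℕ)

lemma pdx_monomialFn : pdx (monomialFn c a b) = monomialFn (c * a) (a - 1) b := by
  funext x y
  simp only [pdx, monomialFn]
  rw [deriv_mul_const_field, deriv_const_mul_field, deriv_pow_field]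
  ring

lemma pdy_monomialFn : pdy (monomialFn c a b) = monomialFn (c * b) a (b - 1) := by
  funext x y
  simp only [pdy, monomialFn]
  rw [deriv_const_mul_field, deriv_pow_field]
  ring

lemma iterate_pdx_monomialFn (k : ℕ) :
    pdx^[k] (monomialFn c a b) = monomialFn (c * a.descFactorial k) (a - k) b := by
  induction k with
  | zero => simp
  | succ k ih =>
    rw [Function.iterate_succ_apply', ih, pdx_monomialFn, Nat.descFactorial_succ, Nat.sub_sub]
    congr 1
    push_cast
    ring

lemma iterate_pdy_monomialFn (k : ℕ) :
    pdy^[k] (monomialFn c a b) = monomialFn (c * b.descFactorial k) a (b - k) := by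
  induction k with
  | zero => simp
  | succ k ih =>
    rw [Function.iterate_succ_apply', ih, pdy_monomialFn, Nat.descFactorial_succ, Nat.sub_sub]
    congr 1
    push_cast
    ring

end Derivatives

section Sums

variable {ι : Type*} (s : Finset ι) (c : ι → ℝ) (a b : ι → ℕ)

lemma iterate_pdx_sum_monomialFn (k : ℕ) :
    pdx^[k] (fun x y => ∑ d ∈ s, monomialFn (c d) (a d) (b d) x y)
      = fun x y => ∑ d ∈ s, pdx^[k] (monomialFn (c d) (a d) (b d)) x y := by
  induction k with
  | zero => rfl
  | succ k ih =>
    simp only [Function.iterate_succ_apply', ih, iterate_pdx_monomialFn]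
    exact pdx_finset_sum s _ fun d _ y => by simp only [monomialFn]; fun_prop

lemma iterate_pdy_sum_monomialFn (k : ℕ) :
    pdy^[k] (fun x y => ∑ d ∈ s, monomialFn (c d) (a d) (b d) x y)
      = fun x y => ∑ d ∈ s, pdy^[k] (monomialFn (c d) (a d) (b d)) x y := by
  induction k with
  | zero => rfl
  | succ k ih =>
    simp only [Function.iterate_succ_apply', ih, iterate_pdy_monomialFn]
    exact pdy_finset_sum s _ fun d _ x => by simp only [monomialFn]; fun_prop

lemma integral_monomialFn_right (c : ℝ) (a b : ℕ) (x y₁ y₂ : ℝ) :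
    ∫ y in y₁..y₂, monomialFn c a b x y = (c * ∫ y in y₁..y₂, y ^ b) * x ^ a := by
  simp only [monomialFn]
  rw [intervalIntegral.integral_const_mul]
  ring

lemma integral_integral_monomialFn (c : ℝ) (a b : ℕ) (x₁ x₂ y₁ y₂ : ℝ) :
    ∫ x in x₁..x₂, ∫ y in y₁..y₂, monomialFn c a b x y
      = c * (∫ x in x₁..x₂, x ^ a) * ∫ y in y₁..y₂, y ^ b := by
  simp only [integral_monomialFn_right]
  rw [intervalIntegral.integral_const_mul]
  ring

lemma integral_integral_sum_monomialFn (x₁ x₂ y₁ y₂ : ℝ) :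
    ∫ x in x₁..x₂, ∫ y in y₁..y₂, ∑ d ∈ s, monomialFn (c d) (a d) (b d) x y
      = ∑ d ∈ s, ∫ x in x₁..x₂, ∫ y in y₁..y₂, monomialFn (c d) (a d) (b d) x y := by
  have hinner (x : ℝ) : ∫ y in y₁..y₂, ∑ d ∈ s, monomialFn (c d) (a d) (b d) x y
      = ∑ d ∈ s, ∫ y in y₁..y₂, monomialFn (c d) (a d) (b d) x y :=
    integral_finsetSum fun d _ =>
      (by fun_prop : Continuous fun y : ℝ => c d * x ^ a d * y ^ b d).intervalIntegrable _ _
  simp_rw [hinner]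
  refine integral_finsetSum fun d _ => ?_
  simp_rw [integral_monomialFn_right]
  exact (by fun_prop : Continuous fun x : ℝ => _ * x ^ a d).intervalIntegrable _ _

lemma cellAverage_sum_monomialFn (x₀ y₀ Δx Δy : ℝ) :
    cellAverage (fun x y => ∑ d ∈ s, monomialFn (c d) (a d) (b d) x y) x₀ y₀ Δx Δy
      = ∑ d ∈ s, cellAverage (monomialFn (c d) (a d) (b d)) x₀ y₀ Δx Δy := by
  simp only [cellAverage, integral_integral_sum_monomialFn, Finset.mul_sum]

lemma conversionFormula_sum_monomialFn (x₀ y₀ Δx Δy : ℝ) :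
    conversionFormula (fun x y => ∑ d ∈ s, monomialFn (c d) (a d) (b d) x y) x₀ y₀ Δx Δy
      = ∑ d ∈ s, conversionFormula (monomialFn (c d) (a d) (b d)) x₀ y₀ Δx Δy := by
  simp only [conversionFormula, iterate_pdy_sum_monomialFn, iterate_pdy_monomialFn,
    iterate_pdx_sum_monomialFn, Finset.mul_sum, Finset.sum_add_distrib]

end Sums

lemma integral_pow_centered_of_le_five (x₀ h : ℝ) {a : ℕ} (ha : a ≤ 5) :
    ∫ x in (x₀ - h / 2)..(x₀ + h / 2), x ^ a
      = h * (x₀ ^ a + h ^ 2 / 24 * a.descFactorial 2 * x₀ ^ (a - 2)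
          + h ^ 4 / 1920 * a.descFactorial 4 * x₀ ^ (a - 4)) := by
  rw [integral_pow]
  interval_cases a <;> norm_num [Nat.descFactorial] <;> ring

lemma Nat.descFactorial_mul_descFactorial_eq_zero {a b i j : ℕ} (h : a + b < i + j) :
    a.descFactorial i * b.descFactorial j = 0 := by
  rw [mul_eq_zero, Nat.descFactorial_eq_zero_iff_lt, Nat.descFactorial_eq_zero_iff_lt]
  omega

lemma cellAverage_monomialFn (x₀ y₀ : ℝ) {Δx Δy : ℝ} (hΔx : Δx ≠ 0) (hΔy : Δy ≠ 0) (c : ℝ)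
    {a b : ℕ} (hab : a + b ≤ 5) :
    cellAverage (monomialFn c a b) x₀ y₀ Δx Δy
      = conversionFormula (monomialFn c a b) x₀ y₀ Δx Δy := by
  have vanish (i j : ℕ) (h : 5 < i + j) : (a.descFactorial i * b.descFactorial j : ℝ) = 0 := by
    exact_mod_cast Nat.descFactorial_mul_descFactorial_eq_zero (by omega)
  rw [cellAverage, conversionFormula, integral_integral_monomialFn,
    integral_pow_centered_of_le_five x₀ Δx (by omega),
    integral_pow_centered_of_le_five y₀ Δy (by omega)]
  simp only [iterate_pdx_monomialFn, iterate_pdy_monomialFn, monomialFn]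
  rw [show ∀ A B : ℝ, 1 / (Δx * Δy) * (c * (Δx * A) * (Δy * B)) = c * A * B from
    fun A B => by field_simp]
  linear_combination
    c * Δx ^ 2 * Δy ^ 4 / 46080 * x₀ ^ (a - 2) * y₀ ^ (b - 4) * vanish 2 4 (by norm_num)
      + c * Δx ^ 4 * Δy ^ 2 / 46080 * x₀ ^ (a - 4) * y₀ ^ (b - 2) * vanish 4 2 (by norm_num)
      + c * Δx ^ 4 * Δy ^ 4 / 3686400 * x₀ ^ (a - 4) * y₀ ^ (b - 4) * vanish 4 4 (by norm_num)

lemma eval_vec_eq_sum_monomialFn (q : MvPolynomial (Fin 2) ℝ) :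
    (fun x y => MvPolynomial.eval ![x, y] q)
      = fun x y => ∑ d ∈ q.support, monomialFn (q.coeff d) (d 0) (d 1) x y := by
  funext x y
  rw [MvPolynomial.eval_eq']
  refine Finset.sum_congr rfl fun d _ => ?_
  simp [monomialFn, Fin.prod_univ_two, mul_assoc]

lemma add_le_totalDegree_of_mem_support {R : Type*} [CommSemiring R]
    {q : MvPolynomial (Fin 2) R} {d : Fin 2 →₀ ℕ} (hd : d ∈ q.support) :
    d 0 + d 1 ≤ q.totalDegree := by
  simpa [Finsupp.sum_fintype, Fin.sum_univ_two] using MvPolynomial.le_totalDegree hd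

theorem stmt_2 (q : MvPolynomial (Fin 2) ℝ) (hq : q.totalDegree ≤ 5)
    (x₀ y₀ Δx Δy : ℝ) (hΔx : 0 < Δx) (hΔy : 0 < Δy)
    (f : ℝ → ℝ → ℝ) (hf : f = fun x y => MvPolynomial.eval ![x, y] q) :
    (1 / (Δx * Δy)) *
        ∫ x in (x₀ - Δx / 2)..(x₀ + Δx / 2), ∫ y in (y₀ - Δy / 2)..(y₀ + Δy / 2), f x y =
      f x₀ y₀ + (Δx ^ 2 / 24) * pdx (pdx f) x₀ y₀ + (Δy ^ 2 / 24) * pdy (pdy f) x₀ y₀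
        + (Δx ^ 4 / 1920) * pdx (pdx (pdx (pdx f))) x₀ y₀
        + (Δx ^ 2 * Δy ^ 2 / 576) * pdx (pdx (pdy (pdy f))) x₀ y₀
        + (Δy ^ 4 / 1920) * pdy (pdy (pdy (pdy f))) x₀ y₀ := by
  change cellAverage f x₀ y₀ Δx Δy = conversionFormula f x₀ y₀ Δx Δy
  rw [hf, eval_vec_eq_sum_monomialFn, cellAverage_sum_monomialFn,
    conversionFormula_sum_monomialFn]
  exact Finset.sum_congr rfl fun d hd => cellAverage_monomialFn x₀ y₀ hΔx.ne' hΔy.ne' _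
    ((add_le_totalDegree_of_mem_support hd).trans hq)
end

section
/- Let q : ℝ → ℝ be a polynomial of degree at most 5, h > 0, and Q(x) := (1/h)·∫_{x−h/2}^{x+h/2} q. Then (1/h⁴)·(Q(x−2h) − 4·Q(x−h) + 6·Q(x) − 4·Q(x+h) + Q(x+2h)) = q''''(x). -/
open Polynomial MeasureTheory

/-!
Averaging over a window commutes with translations, hence with the fourth central difference
`δ⁴`, so the left-hand side is the cell average of `δ⁴q / h⁴`. For `deg q ≤ 5` the difference
is exact, `δ⁴q = h⁴ q''''`, and `q''''` is affine, so its cell average is its value at the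
midpoint `x`.
-/

def fourthCentralDiff (f : ℝ → ℝ) (h y : ℝ) : ℝ :=
  f (y - 2 * h) - 4 * f (y - h) + 6 * f y - 4 * f (y + h) + f (y + 2 * h)

theorem fourthCentralDiff_eval_of_natDegree_le_five {p : ℝ[X]} (hp : p.natDegree ≤ 5)
    (h y : ℝ) :
    fourthCentralDiff p.eval h y = h ^ 4 * (derivative^[4] p).eval y := by
  rw [p.as_sum_range_C_mul_X_pow' (Nat.lt_succ_of_le hp), iterate_derivative_sum]
  simp only [fourthCentralDiff, iterate_derivative_C_mul, iterate_derivative_X_pow_eq_C_mul,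
    Finset.sum_range_succ, Finset.sum_range_zero, eval_add, eval_mul, eval_C, eval_pow, eval_X,
    eval_zero, Nat.descFactorial, Nat.reduceSub, Nat.reduceMul, Nat.cast_ofNat, Nat.cast_zero]
  ring

theorem fourthCentralDiff_integral {f : ℝ → ℝ} (hf : Continuous f) (h a b x : ℝ) :
    fourthCentralDiff (fun y => ∫ t in (y - a)..(y + b), f t) h x =
      ∫ t in (x - a)..(x + b), fourthCentralDiff f h t := by
  have hint : ∀ g : ℝ → ℝ, Continuous g → IntervalIntegrable g volume (x - a) (x + b) :=
    fun g hg => hg.intervalIntegrable _ _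
  simp only [fourthCentralDiff]
  rw [intervalIntegral.integral_add, intervalIntegral.integral_sub, intervalIntegral.integral_add,
    intervalIntegral.integral_sub, intervalIntegral.integral_const_mul,
    intervalIntegral.integral_const_mul, intervalIntegral.integral_const_mul,
    intervalIntegral.integral_comp_sub_right, intervalIntegral.integral_comp_sub_right,
    intervalIntegral.integral_comp_add_right, intervalIntegral.integral_comp_add_right]
  · ring_nf
  all_goals exact hint _ (by fun_prop)

theorem integral_eval_of_natDegree_le_one {p : ℝ[X]} (hp : p.natDegree ≤ 1) (a b : ℝ) :
    ∫ t in a..b, p.eval t = (b - a) * p.eval ((a + b) / 2) := by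
  obtain ⟨c, d, rfl⟩ := exists_eq_X_add_C_of_natDegree_le_one hp
  simp only [eval_add, eval_mul, eval_C, eval_X]
  rw [intervalIntegral.integral_add ((continuous_const_mul c).intervalIntegrable _ _)
      intervalIntegrable_const, intervalIntegral.integral_const_mul, integral_id,
    intervalIntegral.integral_const, smul_eq_mul]
  ring

theorem stmt_8 (q : Polynomial ℝ) (hq : q.natDegree ≤ 5) (h : ℝ) (hh : 0 < h)
    (Q : ℝ → ℝ) (hQ : Q = fun x => (1 / h) * ∫ t in (x - h / 2)..(x + h / 2), q.eval t)
    (x : ℝ) :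
    (1 / h ^ 4) *
        (Q (x - 2 * h) - 4 * Q (x - h) + 6 * Q x - 4 * Q (x + h) + Q (x + 2 * h)) =
      (Polynomial.derivative^[4] q).eval x := by
  have hq'''' : (derivative^[4] q).natDegree ≤ 1 :=
    (natDegree_iterate_derivative q 4).trans (by omega)
  have hQdiff : Q (x - 2 * h) - 4 * Q (x - h) + 6 * Q x - 4 * Q (x + h) + Q (x + 2 * h) =
      1 / h * fourthCentralDiff (fun y => ∫ t in (y - h / 2)..(y + h / 2), q.eval t) h x := by
    simp only [hQ, fourthCentralDiff]
    ring
  rw [hQdiff, fourthCentralDiff_integral q.continuous]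
  simp only [fourthCentralDiff_eval_of_natDegree_le_five hq]
  rw [intervalIntegral.integral_const_mul, integral_eval_of_natDegree_le_one hq'''',
    show (x - h / 2 + (x + h / 2)) / 2 = x by ring]
  field_simp
  ring
end

section
/- Let u : ℝ × ℝ → ℝ be a polynomial in (y,z) of total degree at most 5, and for integers j,k let U(j,k) denote the average of u over the square [(j−1/2)h, (j+1/2)h] × [(k−1/2)h, (k+1/2)h]. Then the paper's sixth-order average-to-point formula u(0,0) ≈ U(0,0) − (1/1920)·[−9U(−2,0) + 116U(−1,0) − 214U(0,0) + 116U(1,0) − 9U(2,0)] − (1/1920)·[−9U(0,−2) + 116U(0,−1) − 214U(0,0) + 116U(0,1) − 9U(0,2)] + (1/576)·[(U(−1,−1) + U(1,−1) − 2U(0,−1)) + (U(−1,1) + U(1,1) − 2U(0,1)) − 2(U(−1,0) + U(1,0) − 2U(0,0))] holds with equality. -/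
/-!
Both sides are linear in `u`, so it suffices to check monomials `y ^ a * z ^ b` with `a + b ≤ 5`.
The cell average of such a monomial factors into one-dimensional cell moments of `y ^ a` and
`z ^ b`, which `integral_pow` computes in closed form; what remains is, for each of the 21
monomials, an identity between polynomials in `h` with rational coefficients.
-/

noncomputable def stencil6 : (ℤ → ℤ → ℝ) →ₗ[ℝ] ℝ where
  toFun V := V 0 0
    - (1 / 1920) * (-9 * V (-2) 0 + 116 * V (-1) 0 - 214 * V 0 0 + 116 * V 1 0 - 9 * V 2 0)
    - (1 / 1920) * (-9 * V 0 (-2) + 116 * V 0 (-1) - 214 * V 0 0 + 116 * V 0 1 - 9 * V 0 2)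
    + (1 / 576) * ((V (-1) (-1) + V 1 (-1) - 2 * V 0 (-1))
      + (V (-1) 1 + V 1 1 - 2 * V 0 1)
      - 2 * (V (-1) 0 + V 1 0 - 2 * V 0 0))
  map_add' V W := by simp only [Pi.add_apply]; ring
  map_smul' c V := by simp only [Pi.smul_apply, smul_eq_mul, RingHom.id_apply]; ring

noncomputable def cellMoment (h : ℝ) (n : ℕ) (j : ℤ) : ℝ :=
  (∫ y in ((j : ℝ) - 1 / 2) * h..((j : ℝ) + 1 / 2) * h, y ^ n) / h

theorem cellMoment_eq {h : ℝ} (hh : h ≠ 0) (n : ℕ) (j : ℤ) :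
    cellMoment h n j =
      h ^ n * (((j : ℝ) + 1 / 2) ^ (n + 1) - ((j : ℝ) - 1 / 2) ^ (n + 1)) / (n + 1) := by
  rw [cellMoment, integral_pow, mul_pow, mul_pow]
  field_simp
  ring

theorem stencil6_cellMoment {h : ℝ} (hh : h ≠ 0) {a b : ℕ} (hab : a + b ≤ 5) :
    stencil6 (fun j k => cellMoment h a j * cellMoment h b k) = 0 ^ a * 0 ^ b := by
  have ha : a ≤ 5 := by omega
  have hb : b ≤ 5 := by omega
  interval_cases a <;> interval_cases b <;> try omega
  all_goals
    simp only [stencil6, LinearMap.coe_mk, AddHom.coe_mk, cellMoment_eq hh]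
    push_cast
    ring

theorem eval_fin_two (u : MvPolynomial (Fin 2) ℝ) (y z : ℝ) :
    MvPolynomial.eval ![y, z] u = ∑ m ∈ u.support, u.coeff m * (y ^ m 0 * z ^ m 1) := by
  simp [MvPolynomial.eval_eq', Fin.prod_univ_two]

theorem cellAverage_eval (u : MvPolynomial (Fin 2) ℝ) (h : ℝ) (j k : ℤ) :
    (1 / (h * h)) * ∫ y in ((j : ℝ) - 1 / 2) * h..((j : ℝ) + 1 / 2) * h,
        ∫ z in ((k : ℝ) - 1 / 2) * h..((k : ℝ) + 1 / 2) * h, MvPolynomial.eval ![y, z] u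
      = ∑ m ∈ u.support, u.coeff m * (cellMoment h (m 0) j * cellMoment h (m 1) k) := by
  have inner : ∀ y : ℝ,
      ∫ z in ((k : ℝ) - 1 / 2) * h..((k : ℝ) + 1 / 2) * h, MvPolynomial.eval ![y, z] u
        = ∑ m ∈ u.support, u.coeff m * y ^ m 0 *
            ∫ z in ((k : ℝ) - 1 / 2) * h..((k : ℝ) + 1 / 2) * h, z ^ m 1 := by
    intro y
    simp_rw [eval_fin_two, ← mul_assoc]
    rw [intervalIntegral.integral_finsetSum
      fun m _ => (by fun_prop : Continuous _).intervalIntegrable _ _]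
    simp only [intervalIntegral.integral_const_mul]
  simp_rw [inner]
  rw [intervalIntegral.integral_finsetSum
      fun m _ => (by fun_prop : Continuous _).intervalIntegrable _ _, Finset.mul_sum]
  refine Finset.sum_congr rfl fun m _ => ?_
  rw [intervalIntegral.integral_mul_const, intervalIntegral.integral_const_mul,
    cellMoment, cellMoment]
  ring

theorem stmt_9 (u : MvPolynomial (Fin 2) ℝ) (hu : u.totalDegree ≤ 5) (h : ℝ) (hh : 0 < h)
    (U : ℤ → ℤ → ℝ)
    (hU : U = fun (j k : ℤ) => (1 / (h * h)) *
        ∫ y in (((j : ℝ) - 1 / 2) * h)..(((j : ℝ) + 1 / 2) * h),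
          ∫ z in (((k : ℝ) - 1 / 2) * h)..(((k : ℝ) + 1 / 2) * h),
            MvPolynomial.eval ![y, z] u) :
    MvPolynomial.eval ![(0 : ℝ), 0] u =
      U 0 0
        - (1 / 1920) * (-9 * U (-2) 0 + 116 * U (-1) 0 - 214 * U 0 0 + 116 * U 1 0 - 9 * U 2 0)
        - (1 / 1920) * (-9 * U 0 (-2) + 116 * U 0 (-1) - 214 * U 0 0 + 116 * U 0 1 - 9 * U 0 2)
        + (1 / 576) * ((U (-1) (-1) + U 1 (-1) - 2 * U 0 (-1))
          + (U (-1) 1 + U 1 1 - 2 * U 0 1)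
          - 2 * (U (-1) 0 + U 1 0 - 2 * U 0 0)) := by
  have hU_sum : U = ∑ m ∈ u.support,
      u.coeff m • fun j k => cellMoment h (m 0) j * cellMoment h (m 1) k := by
    ext j k
    simp only [hU, cellAverage_eval, Finset.sum_apply, Pi.smul_apply, smul_eq_mul]
  change _ = stencil6 U
  rw [hU_sum, map_sum, eval_fin_two]
  refine Finset.sum_congr rfl fun m hm => ?_
  have hdeg : m 0 + m 1 ≤ 5 := by
    have := MvPolynomial.le_totalDegree hm
    rw [Finsupp.sum_fintype _ _ fun _ => rfl, Fin.sum_univ_two] at this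
    omega
  rw [map_smul, stencil6_cellMoment hh.ne' hdeg, smul_eq_mul]
end

section
/- Let f : ℝ × ℝ → ℝ be a polynomial in (y,z) of total degree at most 5, and for integers j,k let f(j,k) := f(jh, kh) denote point values on a uniform grid of spacing h. Let F := (1/h²)·∫_{−h/2}^{h/2}∫_{−h/2}^{h/2} f be the average of f over the square [−h/2, h/2] × [−h/2, h/2]. Then F = f(0,0) + (1/5760)·(−17f(−2,0) + 308f(−1,0) − 582f(0,0) + 308f(1,0) − 17f(2,0)) + (1/5760)·(−17f(0,−2) + 308f(0,−1) − 582f(0,0) + 308f(0,1) − 17f(0,2)) + (1/576)·[(f(−1,−1) + f(1,−1) − 2f(0,−1)) + (f(−1,1) + f(1,1) − 2f(0,1)) − 2(f(−1,0) + f(1,0) − 2f(0,0))]. -/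
set_option maxHeartbeats 1000000

open MeasureTheory Finset

noncomputable def combo (g : ℤ → ℤ → ℝ) : ℝ :=
  g 0 0
    + (1 / 5760) * (-17 * g (-2) 0 + 308 * g (-1) 0 - 582 * g 0 0 + 308 * g 1 0 - 17 * g 2 0)
    + (1 / 5760) * (-17 * g 0 (-2) + 308 * g 0 (-1) - 582 * g 0 0 + 308 * g 0 1 - 17 * g 0 2)
    + (1 / 576) * ((g (-1) (-1) + g 1 (-1) - 2 * g 0 (-1))
      + (g (-1) 1 + g 1 1 - 2 * g 0 1)
      - 2 * (g (-1) 0 + g 1 0 - 2 * g 0 0))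

lemma combo_add (A B : ℤ → ℤ → ℝ) :
    combo (fun j k => A j k + B j k) = combo A + combo B := by
  simp only [combo]; ring

lemma combo_sum {ι : Type*} (s : Finset ι) (G : ι → ℤ → ℤ → ℝ) :
    combo (fun j k => ∑ d ∈ s, G d j k) = ∑ d ∈ s, combo (G d) := by
  induction s using Finset.cons_induction with
  | empty => simp [combo]
  | cons a s ha ih =>
    simp only [Finset.sum_cons]
    rw [combo_add, ih]

lemma combo_smul (c : ℝ) (G : ℤ → ℤ → ℝ) :
    combo (fun j k => c * G j k) = c * combo G := by
  simp only [combo]; ring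

lemma key (h : ℝ) (hh : h ≠ 0) (a b : ℕ) (hab : a + b ≤ 5) :
    (1 / h ^ 2) * ((((h/2)^(a+1) - (-h/2)^(a+1))/((a:ℝ)+1)) * (((h/2)^(b+1) - (-h/2)^(b+1))/((b:ℝ)+1)))
      = combo (fun j k => ((j:ℝ) * h) ^ a * ((k:ℝ) * h) ^ b) := by
  have ha : a ≤ 5 := by omega
  have hb : b ≤ 5 := by omega
  interval_cases a <;> interval_cases b <;>
    first
      | (exfalso; omega)
      | (simp only [combo]; push_cast; field_simp; try ring)

theorem stmt_10 (p : MvPolynomial (Fin 2) ℝ) (hp : p.totalDegree ≤ 5) (h : ℝ) (hh : 0 < h)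
    (f : ℤ → ℤ → ℝ) (hf : f = fun (j k : ℤ) => MvPolynomial.eval ![(j : ℝ) * h, (k : ℝ) * h] p)
    (F : ℝ)
    (hF : F = (1 / h ^ 2) *
        ∫ y in (-h / 2)..(h / 2), ∫ z in (-h / 2)..(h / 2), MvPolynomial.eval ![y, z] p) :
    F = f 0 0
        + (1 / 5760) * (-17 * f (-2) 0 + 308 * f (-1) 0 - 582 * f 0 0 + 308 * f 1 0 - 17 * f 2 0)
        + (1 / 5760) * (-17 * f 0 (-2) + 308 * f 0 (-1) - 582 * f 0 0 + 308 * f 0 1 - 17 * f 0 2)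
        + (1 / 576) * ((f (-1) (-1) + f 1 (-1) - 2 * f 0 (-1))
          + (f (-1) 1 + f 1 1 - 2 * f 0 1)
          - 2 * (f (-1) 0 + f 1 0 - 2 * f 0 0)) := by
  have hh' : h ≠ 0 := ne_of_gt hh
  have hev : ∀ y z : ℝ, MvPolynomial.eval ![y, z] p
      = ∑ d ∈ p.support, p.coeff d * (y ^ d 0 * z ^ d 1) := by
    intro y z
    rw [MvPolynomial.eval_eq']
    refine Finset.sum_congr rfl fun d _ => ?_
    rw [Fin.prod_univ_two]
    simp
  have hdeg : ∀ d ∈ p.support, d 0 + d 1 ≤ 5 := by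
    intro d hd
    have h1 := MvPolynomial.le_totalDegree hd
    have h2 : (d.sum fun _ e => e) = d 0 + d 1 := by
      rw [Finsupp.sum_fintype _ _ (fun _ => rfl), Fin.sum_univ_two]
    omega
  have hint : ∀ n : ℕ, (∫ t in (-h / 2)..(h / 2), t ^ n)
      = ((h/2)^(n+1) - (-h/2)^(n+1))/((n:ℝ)+1) := by
    intro n
    rw [integral_pow]
  have inner : ∀ y : ℝ, (∫ z in (-h / 2)..(h / 2), MvPolynomial.eval ![y, z] p)
      = ∑ d ∈ p.support,
          (p.coeff d * (((h/2)^(d 1+1) - (-h/2)^(d 1+1))/((d 1 : ℝ)+1))) * y ^ d 0 := by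
    intro y
    simp_rw [hev]
    rw [intervalIntegral.integral_finset_sum (fun d _ =>
      (Continuous.intervalIntegrable (by fun_prop) _ _))]
    refine Finset.sum_congr rfl fun d _ => ?_
    rw [intervalIntegral.integral_const_mul, intervalIntegral.integral_const_mul, hint]
    ring
  have outer : F = ∑ d ∈ p.support,
      p.coeff d * ((1 / h ^ 2) *
        ((((h/2)^(d 0+1) - (-h/2)^(d 0+1))/((d 0 : ℝ)+1)) *
         (((h/2)^(d 1+1) - (-h/2)^(d 1+1))/((d 1 : ℝ)+1)))) := by
    rw [hF]
    simp_rw [inner]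
    rw [intervalIntegral.integral_finset_sum (fun d _ =>
      (Continuous.intervalIntegrable (by fun_prop) _ _))]
    rw [Finset.mul_sum]
    refine Finset.sum_congr rfl fun d _ => ?_
    rw [intervalIntegral.integral_const_mul, hint]
    ring
  have hkey : ∀ d ∈ p.support,
      (1 / h ^ 2) * ((((h/2)^(d 0+1) - (-h/2)^(d 0+1))/((d 0 : ℝ)+1)) *
         (((h/2)^(d 1+1) - (-h/2)^(d 1+1))/((d 1 : ℝ)+1)))
      = combo (fun j k => ((j:ℝ) * h) ^ d 0 * ((k:ℝ) * h) ^ d 1) := by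
    intro d hd
    exact key h hh' (d 0) (d 1) (hdeg d hd)
  suffices hs : F = combo f by
    rw [hs]; simp only [combo]
  rw [outer]
  have hf' : f = fun (j k : ℤ) => ∑ d ∈ p.support,
      p.coeff d * (((j:ℝ) * h) ^ d 0 * ((k:ℝ) * h) ^ d 1) := by
    rw [hf]; funext j k; exact hev _ _
  rw [hf', combo_sum]
  refine Finset.sum_congr rfl fun d hd => ?_
  rw [combo_smul, hkey d hd]
end

section
/- For a C⁶ function q : ℝ → ℝ and fixed x₀, the one-dimensional average-to-point conversion error satisfies: letting Q(x) := (1/h)·∫_{x−h/2}^{x+h/2} q, the quantity Q(x₀) − (1/1920)·(−9Q(x₀−2h) + 116Q(x₀−h) − 214Q(x₀) + 116Q(x₀+h) − 9Q(x₀+2h)) − q(x₀) is O(h⁶) as h → 0⁺. -/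
/-!
Let `F` be the primitive of `q` with `F x₀ = 0`, so `F` is `C⁷` and
`h * Q h x = F (x + h/2) - F (x - h/2)`. The conversion formula is then `h⁻¹` times a
finite-difference stencil applied to `F` at the six nodes `x₀ ± h/2, x₀ ± 3h/2, x₀ ± 5h/2`.
That stencil reproduces `h * F' x₀ = h * q x₀` exactly on polynomials of degree `≤ 6`, so on `F`
it only sees the Taylor remainder `O(h⁷)`; dividing by `h` leaves `O(h⁶)`.
-/

open MeasureTheory Asymptotics Filter Set Finset Topology

theorem contDiff_integral_of_contDiff {q : ℝ → ℝ} {n : ℕ} (hq : ContDiff ℝ n q) (a : ℝ) :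
    ContDiff ℝ (n + 1) (fun x => ∫ t in a..x, q t) := by
  have hderiv : deriv (fun x => ∫ t in a..x, q t) = q :=
    funext (hq.continuous.deriv_integral q a)
  refine contDiff_succ_iff_deriv.2 ⟨fun x => ?_, by simp, by rwa [hderiv]⟩
  exact (hq.continuous.integral_hasStrictDerivAt a x).hasDerivAt.differentiableAt

theorem taylor_isBigO_univ {E : Type*} [NormedAddCommGroup E] [NormedSpace ℝ E]
    {f : ℝ → E} {x₀ : ℝ} {n : ℕ} (hf : ContDiff ℝ (n + 1) f) :
    (fun x ↦ f x - taylorWithinEval f n univ x₀ x) =O[𝓝 x₀] fun x ↦ (x - x₀) ^ (n + 1) := by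
  have hsucc := (taylor_isLittleO_univ (x₀ := x₀) (n := n + 1) (mod_cast hf)).isBigO
  have hterm : (fun x ↦ (((n + 1 : ℝ) * n.factorial)⁻¹ * (x - x₀) ^ (n + 1)) •
      iteratedDerivWithin (n + 1) f univ x₀) =O[𝓝 x₀] fun x ↦ (x - x₀) ^ (n + 1) :=
    isBigO_of_le'
      (c := ‖((n + 1 : ℝ) * n.factorial)⁻¹‖ * ‖iteratedDerivWithin (n + 1) f univ x₀‖) _
      fun x => by rw [norm_smul, norm_mul]; exact le_of_eq (by ring)
  refine (hsucc.add hterm).congr_left fun x => ?_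
  rw [taylorWithinEval_succ]
  abel

theorem Asymptotics.IsBigO.comp_affine {E : Type*} [NormedAddCommGroup E]
    {f : ℝ → E} {x₀ : ℝ} {n : ℕ} (hf : f =O[𝓝 x₀] fun x ↦ (x - x₀) ^ n) (c : ℝ) :
    (fun h ↦ f (x₀ + c * h)) =O[𝓝 0] fun h ↦ h ^ n := by
  have hlim : Tendsto (fun h : ℝ ↦ x₀ + c * h) (𝓝 0) (𝓝 x₀) := by
    have : Continuous fun h : ℝ ↦ x₀ + c * h := by fun_prop
    simpa using this.tendsto 0
  refine (hf.comp_tendsto hlim).trans ?_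
  simp only [Function.comp_def, add_sub_cancel_left, mul_pow]
  exact isBigO_const_mul_self _ _ _

theorem Asymptotics.IsBigO.inv_mul_of_pow_succ {f : ℝ → ℝ} {n : ℕ}
    (hf : f =O[𝓝 0] fun h ↦ h ^ (n + 1)) :
    (fun h ↦ h⁻¹ * f h) =O[𝓝[≠] 0] fun h ↦ h ^ n := by
  refine ((isBigO_refl (fun h : ℝ ↦ h⁻¹) _).mul (hf.mono nhdsWithin_le_nhds)).trans_eventuallyEq ?_
  filter_upwards [self_mem_nhdsWithin] with h hh
  rw [pow_succ', inv_mul_cancel_left₀ hh]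

noncomputable def derivStencil (F : ℝ → ℝ) (x₀ h : ℝ) : ℝ :=
  (2250 * (F (x₀ + 1 / 2 * h) - F (x₀ - 1 / 2 * h))
    - 125 * (F (x₀ + 3 / 2 * h) - F (x₀ - 3 / 2 * h))
    + 9 * (F (x₀ + 5 / 2 * h) - F (x₀ - 5 / 2 * h))) / 1920

theorem derivStencil_sub (F G : ℝ → ℝ) (x₀ h : ℝ) :
    derivStencil (F - G) x₀ h = derivStencil F x₀ h - derivStencil G x₀ h := by
  simp only [derivStencil, Pi.sub_apply]
  ring

theorem derivStencil_taylorWithinEval (F : ℝ → ℝ) (s : Set ℝ) (x₀ h : ℝ) :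
    derivStencil (taylorWithinEval F 6 s x₀) x₀ h = h * iteratedDerivWithin 1 F s x₀ := by
  simp only [derivStencil, taylor_within_apply, sum_range_succ, sum_range_zero, smul_eq_mul,
    Nat.factorial]
  ring

theorem derivStencil_isBigO {R : ℝ → ℝ} {x₀ : ℝ} {n : ℕ}
    (hR : R =O[𝓝 x₀] fun x ↦ (x - x₀) ^ n) :
    (fun h ↦ derivStencil R x₀ h) =O[𝓝 0] fun h ↦ h ^ n := by
  have hnode (c : ℝ) : (fun h ↦ R (x₀ + c * h) - R (x₀ - c * h)) =O[𝓝 0] fun h ↦ h ^ n := by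
    simpa only [sub_eq_add_neg, neg_mul] using (hR.comp_affine c).sub (hR.comp_affine (-c))
  simpa only [derivStencil, div_eq_inv_mul] using
    ((((hnode _).const_mul_left 2250).sub ((hnode _).const_mul_left 125)).add
      ((hnode _).const_mul_left 9)).const_mul_left 1920⁻¹

theorem stmt_11 (q : ℝ → ℝ) (hq : ContDiff ℝ 6 q) (x₀ : ℝ)
    (Q : ℝ → ℝ → ℝ)
    (hQ : Q = fun h x => (1 / h) * ∫ t in (x - h / 2)..(x + h / 2), q t) :
    (fun h : ℝ =>
        Q h x₀
          - (1 / 1920) * (-9 * Q h (x₀ - 2 * h) + 116 * Q h (x₀ - h) - 214 * Q h x₀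
            + 116 * Q h (x₀ + h) - 9 * Q h (x₀ + 2 * h))
          - q x₀) =O[nhdsWithin 0 (Set.Ioi 0)] (fun h : ℝ => h ^ 6) := by
  set F : ℝ → ℝ := fun x => ∫ t in x₀..x, q t
  have hF : ContDiff ℝ (6 + 1) F := contDiff_integral_of_contDiff (n := 6) hq x₀
  have hQF (h x : ℝ) : Q h x = h⁻¹ * (F (x + h / 2) - F (x - h / 2)) := by
    simp only [hQ, one_div, F]
    rw [intervalIntegral.integral_interval_sub_left]
    all_goals exact hq.continuous.intervalIntegrable _ _
  have hTaylor (h : ℝ) : derivStencil (taylorWithinEval F 6 univ x₀) x₀ h = h * q x₀ := by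
    rw [derivStencil_taylorWithinEval, iteratedDerivWithin_one, derivWithin_univ,
      hq.continuous.deriv_integral]
  have hRemainder := (derivStencil_isBigO (taylor_isBigO_univ (x₀ := x₀) hF)).inv_mul_of_pow_succ
  refine (hRemainder.mono (nhdsWithin_mono _ fun _ => ne_of_gt)).congr' ?_ .rfl
  filter_upwards [self_mem_nhdsWithin] with h (hh : 0 < h)
  have hsplit := derivStencil_sub F (taylorWithinEval F 6 univ x₀) x₀ h
  rw [hTaylor] at hsplit
  simp only [hQF, Pi.sub_def] at hsplit ⊢
  rw [hsplit, mul_sub, inv_mul_cancel_left₀ hh.ne']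
  simp only [derivStencil]
  ring_nf
end

section
/- For any polynomial q : ℝ → ℝ of degree at most 7 and h > 0, with Q(x) := (1/h)·∫_{x−h/2}^{x+h/2} q, the identity Q(x) = q(x) + (h²/24)·q''(x) + (h⁴/1920)·q''''(x) + (h⁶/322560)·q⁽⁶⁾(x) holds for all x. -/
/-!
Shifting the window to `[-h/2, h/2]` and expanding `q (x + s)` in its (finite) Taylor series in `s`,
the odd moments of the symmetric window vanish and the even ones give
`(1/h) ∫_{-h/2}^{h/2} s^(2k) ds = (h/2)^(2k) / (2k+1)`. Hence the averaging operator is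
`∑ₖ (h/2)^(2k) / (2k+1)! · D^(2k)`, which for `k = 1, 2, 3` has the coefficients `1/24`, `1/1920`,
`1/322560`; a polynomial of degree at most 7 has no eighth derivative.
-/

open Polynomial MeasureTheory
open scoped Nat

theorem Finset.sum_range_two_mul {M : Type*} [AddCommMonoid M] (f : ℕ → M) (n : ℕ) :
    ∑ k ∈ range (2 * n), f k = ∑ k ∈ range n, (f (2 * k) + f (2 * k + 1)) := by
  induction n with
  | zero => simp
  | succ n ih => rw [Nat.mul_succ, sum_range_succ, sum_range_succ, sum_range_succ, ih, add_assoc]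

namespace Polynomial

theorem eval_iterate_derivative_eq_factorial_mul {R : Type*} [Semiring R] (q : R[X]) (k : ℕ)
    (x : R) : (derivative^[k] q).eval x = k ! * (hasseDeriv k q).eval x := by
  rw [← factorial_smul_hasseDeriv]
  simp [nsmul_eq_mul]

theorem eval_add_eq_sum_range_iterate_derivative {K : Type*} [Field K] [CharZero K] (q : K[X])
    {n : ℕ} (hn : q.natDegree < n) (x s : K) :
    q.eval (x + s) = ∑ k ∈ Finset.range n, (derivative^[k] q).eval x / k ! * s ^ k := by
  rw [add_comm, ← taylor_eval, eval_eq_sum_range' (by rwa [natDegree_taylor])]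
  refine Finset.sum_congr rfl fun k _ => ?_
  rw [taylor_coeff, eval_iterate_derivative_eq_factorial_mul,
    mul_div_cancel_left₀ _ (Nat.cast_ne_zero.mpr k.factorial_ne_zero)]

end Polynomial

theorem integral_neg_self_pow_two_mul (a : ℝ) (k : ℕ) :
    ∫ s in -a..a, s ^ (2 * k) = 2 * a ^ (2 * k + 1) / (2 * k + 1) := by
  rw [integral_pow, Odd.neg_pow (odd_two_mul_add_one k)]
  push_cast
  ring

theorem integral_neg_self_pow_two_mul_add_one (a : ℝ) (k : ℕ) :
    ∫ s in -a..a, s ^ (2 * k + 1) = 0 := by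
  rw [integral_pow, Even.neg_pow ⟨k + 1, by ring⟩, sub_self, zero_div]

theorem average_eq_sum_range_iterate_derivative (q : ℝ[X]) {n : ℕ} (hn : q.natDegree < 2 * n)
    {h : ℝ} (hh : h ≠ 0) (x : ℝ) :
    (1 / h) * ∫ t in (x - h / 2)..(x + h / 2), q.eval t =
      ∑ k ∈ Finset.range n, (h / 2) ^ (2 * k) / (2 * k + 1)! * (derivative^[2 * k] q).eval x := by
  have hshift : ∫ t in (x - h / 2)..(x + h / 2), q.eval t =
      ∫ s in -(h / 2)..(h / 2), q.eval (x + s) := by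
    rw [intervalIntegral.integral_comp_add_left (fun t => q.eval t), sub_eq_add_neg, add_comm,
      add_comm x]
  simp_rw [hshift, eval_add_eq_sum_range_iterate_derivative q hn x]
  rw [intervalIntegral.integral_finsetSum fun k _ =>
    (by fun_prop : Continuous _).intervalIntegrable _ _]
  simp_rw [intervalIntegral.integral_const_mul]
  rw [Finset.sum_range_two_mul, Finset.mul_sum]
  refine Finset.sum_congr rfl fun k _ => ?_
  rw [integral_neg_self_pow_two_mul, integral_neg_self_pow_two_mul_add_one, Nat.factorial_succ]
  push_cast
  field_simp
  ring

theorem stmt_15 (q : Polynomial ℝ) (hq : q.natDegree ≤ 7) (h : ℝ) (hh : 0 < h)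
    (Q : ℝ → ℝ) (hQ : Q = fun x => (1 / h) * ∫ t in (x - h / 2)..(x + h / 2), q.eval t)
    (x : ℝ) :
    Q x = q.eval x + (h ^ 2 / 24) * (Polynomial.derivative^[2] q).eval x
        + (h ^ 4 / 1920) * (Polynomial.derivative^[4] q).eval x
        + (h ^ 6 / 322560) * (Polynomial.derivative^[6] q).eval x := by
  rw [hQ]
  beta_reduce
  rw [average_eq_sum_range_iterate_derivative q (n := 4) (by omega) hh.ne' x]
  simp only [Finset.sum_range_succ, Finset.sum_range_zero, Nat.factorial]
  norm_num
  ring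
end
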